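/- arXiv:2510.09286 — 5 statements merged into one kernel-verified Lean document; each statement's English description precedes it below -/
import Mathlib

section
/- Suppose H admits edge-domination steps removing e₁' with witness e₁ and removing e₂' with witness e₂, where e₁' ≠ e₂', e₂ = e₁' and e₁ ≠ e₂'. Then V(e₁) ⊆ V(e₂'), so e₁ witnesses both removals, and the hypergraphs obtained by removing e₁' and by removing e₂' can each be further reduced by one edge-domination step (with witness e₁) to the common hypergraph where both e₁' and e₂' are removed. -/
/-- A hypergraph: finite node set, finite edge set, incidence relation. -/
structure HG where
  V : Finset ℕ
  E : Finset ℕ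
  I : Finset (ℕ × ℕ)

/-- Nodes incident to edge `e`. -/
def HG.Ve (H : HG) (e : ℕ) : Finset ℕ := H.V.filter (fun v => (v, e) ∈ H.I)

/-- Edges incident to node `v`. -/
def HG.Ev (H : HG) (v : ℕ) : Finset ℕ := H.E.filter (fun e => (v, e) ∈ H.I)

/-- Remove edge `e'` (and its incidences). -/
def HG.removeEdge (H : HG) (e' : ℕ) : HG :=
  ⟨H.V, H.E.erase e', H.I.filter (fun p => p.2 ≠ e')⟩

/-- Remove node `v` (and its incidences). -/
def HG.removeNode (H : HG) (v : ℕ) : HG :=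
  ⟨H.V.erase v, H.E, H.I.filter (fun p => p.1 ≠ v)⟩

/-- Edge-domination step: remove a dominating edge `e'`. -/
def EdgeStep (H H' : HG) : Prop :=
  ∃ e e', e ∈ H.E ∧ e' ∈ H.E ∧ e ≠ e' ∧ H.Ve e ⊆ H.Ve e' ∧ H' = H.removeEdge e'

/-- Node-domination step: remove a dominated node `v`. -/
def NodeStep (H H' : HG) : Prop :=
  ∃ v v', v ∈ H.V ∧ v' ∈ H.V ∧ v ≠ v' ∧ H.Ev v ⊆ H.Ev v' ∧ H' = H.removeNode v

/-- One application of either rewrite rule. -/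
def Step (H H' : HG) : Prop := EdgeStep H H' ∨ NodeStep H H'

/-- Hypergraph isomorphism. -/
def Iso (H H' : HG) : Prop :=
  ∃ f : {x // x ∈ H'.V} ≃ {x // x ∈ H.V}, ∃ g : {x // x ∈ H'.E} ≃ {x // x ∈ H.E},
    ∀ (v : {x // x ∈ H'.V}) (e : {x // x ∈ H'.E}),
      ((v : ℕ), (e : ℕ)) ∈ H'.I ↔ ((f v : ℕ), (g e : ℕ)) ∈ H.I

/-- One rewrite step between isomorphism classes, via representatives. -/
def StepIso (H K : HG) : Prop := ∃ H' K', Iso H H' ∧ Iso K K' ∧ Step H' K'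


lemma Ve_removeEdge (H : HG) (e' e : ℕ) (h : e ≠ e') :
    (H.removeEdge e').Ve e = H.Ve e := by
  ext v
  simp [HG.Ve, HG.removeEdge, h]

/-- Overlapping edge-domination steps with `e₂ = e₁'`: the witness `e₁` serves for both. -/
theorem edge_edge_chain (H : HG) (e₁ e₁' e₂ e₂' : ℕ)
    (he₁ : e₁ ∈ H.E) (he₁' : e₁' ∈ H.E) (he₂ : e₂ ∈ H.E) (he₂' : e₂' ∈ H.E)
    (hne₁ : e₁ ≠ e₁') (hne₂ : e₂ ≠ e₂')
    (h12 : e₁' ≠ e₂') (heq : e₂ = e₁') (h1 : e₁ ≠ e₂')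
    (hd₁ : H.Ve e₁ ⊆ H.Ve e₁') (hd₂ : H.Ve e₂ ⊆ H.Ve e₂') :
    H.Ve e₁ ⊆ H.Ve e₂' ∧
    EdgeStep (H.removeEdge e₁') ((H.removeEdge e₁').removeEdge e₂') ∧
    EdgeStep (H.removeEdge e₂') ((H.removeEdge e₂').removeEdge e₁') ∧
    (H.removeEdge e₁').removeEdge e₂' = (H.removeEdge e₂').removeEdge e₁' := by
  have hsub : H.Ve e₁ ⊆ H.Ve e₂' := fun v hv => hd₂ (heq ▸ hd₁ hv)
  refine ⟨hsub, ?_, ?_, ?_⟩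
  · exact ⟨e₁, e₂', by simp [HG.removeEdge, he₁, hne₁],
      by simp [HG.removeEdge, he₂', Ne.symm h12], h1,
      by rw [Ve_removeEdge _ _ _ hne₁, Ve_removeEdge _ _ _ (Ne.symm h12)]; exact hsub, rfl⟩
  · exact ⟨e₁, e₁', by simp [HG.removeEdge, he₁, h1],
      by simp [HG.removeEdge, he₁', h12], hne₁,
      by rw [Ve_removeEdge _ _ _ h1, Ve_removeEdge _ _ _ h12]; exact hd₁, rfl⟩
  · simp only [HG.removeEdge, HG.mk.injEq]
    refine ⟨trivial, Finset.erase_right_comm, ?_⟩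
    rw [Finset.filter_filter, Finset.filter_filter]
    exact Finset.filter_congr fun p _ => by tauto
end

section
/- Removing a node commutes with edge-domination: if H admits a node-domination step removing v₁ (witness v₁' with E(v₁) ⊆ E(v₁'), v₁ ≠ v₁') and an edge-domination step removing e₂' (witness e₂ with V(e₂) ⊆ V(e₂'), e₂ ≠ e₂'), then in H with e₂' removed we still have E(v₁) ⊆ E(v₁') (computed in the new hypergraph), so node-domination still applies to remove v₁, and the result equals H with both v₁ and e₂' removed. -/
/-- Node-domination still applies after an edge-domination step, and removals commute. -/
theorem node_after_edge (H : HG) (v₁ v₁' e₂ e₂' : ℕ)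
    (hv₁ : v₁ ∈ H.V) (hv₁' : v₁' ∈ H.V) (hvne : v₁ ≠ v₁')
    (he₂ : e₂ ∈ H.E) (he₂' : e₂' ∈ H.E) (hene : e₂ ≠ e₂')
    (hdn : H.Ev v₁ ⊆ H.Ev v₁') (hde : H.Ve e₂ ⊆ H.Ve e₂') :
    (H.removeEdge e₂').Ev v₁ ⊆ (H.removeEdge e₂').Ev v₁' ∧
    NodeStep (H.removeEdge e₂') ((H.removeEdge e₂').removeNode v₁) ∧
    (H.removeEdge e₂').removeNode v₁ = (H.removeNode v₁).removeEdge e₂' := by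
  have hsub : (H.removeEdge e₂').Ev v₁ ⊆ (H.removeEdge e₂').Ev v₁' := by
    intro e he
    simp only [HG.Ev, HG.removeEdge, Finset.mem_filter, Finset.mem_erase] at he ⊢
    have := hdn (by simp [HG.Ev, he.1.2, he.2] : e ∈ H.Ev v₁)
    simp [HG.Ev] at this
    exact ⟨⟨he.1.1, this.1⟩, this.2, he.2.2⟩
  refine ⟨hsub, ⟨v₁, v₁', by simp [HG.removeEdge, hv₁], by simp [HG.removeEdge, hv₁'],
    hvne, hsub, rfl⟩, ?_⟩
  simp only [HG.removeEdge, HG.removeNode, HG.mk.injEq]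
  refine ⟨trivial, trivial, ?_⟩
  ext p
  simp only [Finset.mem_filter]
  tauto
end

section
/- Removing an edge commutes with node-domination: if H admits a node-domination step removing v₁ (witness v₁', E(v₁) ⊆ E(v₁'), v₁ ≠ v₁') and an edge-domination step removing e₂' (witness e₂, V(e₂) ⊆ V(e₂'), e₂ ≠ e₂'), then in H with v₁ removed we still have V(e₂) ⊆ V(e₂') (computed in the new hypergraph), so edge-domination still applies to remove e₂', and the result equals H with both v₁ and e₂' removed. -/
/-- Edge-domination still applies after a node-domination step, and removals commute. -/
theorem edge_after_node (H : HG) (v₁ v₁' e₂ e₂' : ℕ)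
    (hv₁ : v₁ ∈ H.V) (hv₁' : v₁' ∈ H.V) (hvne : v₁ ≠ v₁')
    (he₂ : e₂ ∈ H.E) (he₂' : e₂' ∈ H.E) (hene : e₂ ≠ e₂')
    (hdn : H.Ev v₁ ⊆ H.Ev v₁') (hde : H.Ve e₂ ⊆ H.Ve e₂') :
    (H.removeNode v₁).Ve e₂ ⊆ (H.removeNode v₁).Ve e₂' ∧
    EdgeStep (H.removeNode v₁) ((H.removeNode v₁).removeEdge e₂') ∧
    (H.removeNode v₁).removeEdge e₂' = (H.removeEdge e₂').removeNode v₁ := by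
  have hsub : (H.removeNode v₁).Ve e₂ ⊆ (H.removeNode v₁).Ve e₂' := by
    intro x hx
    simp only [HG.removeNode, HG.Ve, Finset.mem_filter, Finset.mem_erase] at hx ⊢
    have h2 : x ∈ H.Ve e₂ := by
      simp only [HG.Ve, Finset.mem_filter]
      exact ⟨hx.1.2, hx.2.1⟩
    have := hde h2
    simp only [HG.Ve, Finset.mem_filter] at this
    exact ⟨⟨hx.1.1, this.1⟩, this.2, hx.2.2⟩
  refine ⟨hsub, ⟨e₂, e₂', by simpa [HG.removeNode] using he₂,
    by simpa [HG.removeNode] using he₂', hene, hsub, rfl⟩, ?_⟩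
  simp only [HG.removeNode, HG.removeEdge]
  congr 1
  · exact Finset.filter_comm _ _ _
end

section
/- Suppose H admits two node-domination steps removing v₁ (witness v₁') and v₂ (witness v₂'), with v₁ ≠ v₂, v₁ ≠ v₂' and v₂ ≠ v₁'. Then both removals can be performed in either order (each step still licensed by node-domination) and both orders yield the same hypergraph, namely H with both v₁ and v₂ removed. -/
lemma Ev_removeNode (H : HG) (w v : ℕ) (h : v ≠ w) :
    (H.removeNode w).Ev v = H.Ev v := by
  ext e
  simp [HG.Ev, HG.removeNode, h]

/-- Two non-overlapping node-domination steps commute. -/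
theorem node_node_commute (H : HG) (v₁ v₁' v₂ v₂' : ℕ)
    (hv₁ : v₁ ∈ H.V) (hv₁' : v₁' ∈ H.V) (hv₂ : v₂ ∈ H.V) (hv₂' : v₂' ∈ H.V)
    (hne₁ : v₁ ≠ v₁') (hne₂ : v₂ ≠ v₂')
    (h12 : v₁ ≠ v₂) (h1 : v₁ ≠ v₂') (h2 : v₂ ≠ v₁')
    (hd₁ : H.Ev v₁ ⊆ H.Ev v₁') (hd₂ : H.Ev v₂ ⊆ H.Ev v₂') :
    NodeStep (H.removeNode v₁) ((H.removeNode v₁).removeNode v₂) ∧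
    NodeStep (H.removeNode v₂) ((H.removeNode v₂).removeNode v₁) ∧
    (H.removeNode v₁).removeNode v₂ = (H.removeNode v₂).removeNode v₁ := by
  refine ⟨⟨v₂, v₂', ?_, ?_, hne₂, ?_, rfl⟩, ⟨v₁, v₁', ?_, ?_, hne₁, ?_, rfl⟩, ?_⟩
  · exact Finset.mem_erase.2 ⟨Ne.symm h12, hv₂⟩
  · exact Finset.mem_erase.2 ⟨h1.symm, hv₂'⟩
  · rw [Ev_removeNode H v₁ v₂ (Ne.symm h12), Ev_removeNode H v₁ v₂' h1.symm]; exact hd₂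
  · exact Finset.mem_erase.2 ⟨h12, hv₁⟩
  · exact Finset.mem_erase.2 ⟨h2.symm, hv₁'⟩
  · rw [Ev_removeNode H v₂ v₁ h12, Ev_removeNode H v₂ v₁' h2.symm]; exact hd₁
  · simp only [HG.removeNode, HG.mk.injEq, Finset.filter_filter]
    refine ⟨Finset.erase_right_comm, trivial, ?_⟩
    apply Finset.filter_congr; intro p _; simp [and_comm]
end

section
/- The rewrite relation → (edge-domination and node-domination) is confluent up to isomorphism: if H →* H₁ and H →* H₂, then there exist hypergraphs H₃ and H₄ with H₁ →* H₃, H₂ →* H₄, and H₃ isomorphic to H₄. -/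
/-!
Newman's lemma holds relative to an equivalence along which steps can be transported: a terminating
relation that is locally confluent up to isomorphism is confluent up to isomorphism. Each step
removes a node or an edge, so the size decreases. Two steps removing different elements commute,
except when two edges dominate each other (or two nodes are dominated by each other); then the two
results differ only by the transposition of the two mutually dominating elements.
-/

namespace Relation

variable {α : Type*} {r s : α → α → Prop}

def JoinUpTo (r s : α → α → Prop) (a b : α) : Prop :=
  ∃ a' b', ReflTransGen r a a' ∧ ReflTransGen r b b' ∧ s a' b'

theorem JoinUpTo.symm (hs : ∀ {a b}, s a b → s b a) {a b : α} (h : JoinUpTo r s a b) :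
    JoinUpTo r s b a :=
  let ⟨a', b', ha, hb, hab⟩ := h
  ⟨b', a', hb, ha, hs hab⟩

theorem ReflTransGen.exists_of_simulation
    (hsim : ∀ {a a' b'}, s a a' → r a' b' → ∃ b, r a b ∧ s b b')
    {a a' b' : α} (hab : s a a') (h : ReflTransGen r a' b') :
    ∃ b, ReflTransGen r a b ∧ s b b' := by
  induction h with
  | refl => exact ⟨a, .refl, hab⟩
  | tail _ hstep ih =>
    obtain ⟨c, hac, hc⟩ := ih
    obtain ⟨b, hcb, hb⟩ := hsim hc hstep
    exact ⟨b, hac.tail hcb, hb⟩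

theorem joinUpTo_of_locally (hs : Equivalence s) (hwf : WellFounded (flip r))
    (hsim : ∀ {a a' b'}, s a a' → r a' b' → ∃ b, r a b ∧ s b b')
    (hloc : ∀ {a b c}, r a b → r a c → JoinUpTo r s b c) {a b c : α}
    (hb : ReflTransGen r a b) (hc : ReflTransGen r a c) : JoinUpTo r s b c := by
  induction a using hwf.induction generalizing b c with
  | _ a ih =>
  rcases hb.cases_head with rfl | ⟨b₀, hab₀, hb₀b⟩
  · exact ⟨c, c, hc, .refl, hs.refl c⟩
  rcases hc.cases_head with rfl | ⟨c₀, hac₀, hc₀c⟩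
  · exact ⟨b, b, .refl, hb, hs.refl b⟩
  obtain ⟨b₁, c₁, hb₀b₁, hc₀c₁, hbc₁⟩ := hloc hab₀ hac₀
  obtain ⟨x, y, hbx, hb₁y, hxy⟩ := ih b₀ hab₀ hb₀b hb₀b₁
  obtain ⟨y', hc₁y', hyy'⟩ := hb₁y.exists_of_simulation hsim (hs.symm hbc₁)
  obtain ⟨z, w, hy'z, hcw, hzw⟩ := ih c₀ hac₀ (hc₀c₁.trans hc₁y') hc₀c
  obtain ⟨x', hxx', hx'z⟩ := hy'z.exists_of_simulation hsim (hs.trans hxy (hs.symm hyy'))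
  exact ⟨x', w, hbx.trans hxx', hcw, hs.trans hx'z hzw⟩

end Relation

def Equiv.finsetErase {α β : Type*} [DecidableEq α] [DecidableEq β] {s : Finset α}
    {t : Finset β} (g : {x // x ∈ s} ≃ {x // x ∈ t}) (a : {x // x ∈ s}) :
    {x // x ∈ s.erase a} ≃ {x // x ∈ t.erase (g a)} :=
  (Equiv.subtypeEquivRight fun _ => by rw [Finset.mem_erase, and_comm]).trans <|
    (Equiv.subtypeSubtypeEquivSubtypeInter (· ∈ s) (· ≠ (a : α))).symm.trans <|
    (g.subtypeEquiv fun _ => by simp only [ne_eq, ← Subtype.ext_iff, g.injective.eq_iff]).trans <|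
    (Equiv.subtypeSubtypeEquivSubtypeInter (· ∈ t) (· ≠ (g a : β))).trans
      (Equiv.subtypeEquivRight fun _ => by rw [Finset.mem_erase, and_comm])

namespace HG

theorem ext {H K : HG} (hV : H.V = K.V) (hE : H.E = K.E) (hI : H.I = K.I) : H = K := by
  cases H; cases K; simp_all

variable {H : HG}

@[simp]
theorem mem_Ve {v e : ℕ} : v ∈ H.Ve e ↔ v ∈ H.V ∧ (v, e) ∈ H.I := Finset.mem_filter

@[simp]
theorem mem_Ev {v e : ℕ} : e ∈ H.Ev v ↔ e ∈ H.E ∧ (v, e) ∈ H.I := Finset.mem_filter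

theorem Ve_removeEdge {e e' : ℕ} (h : e ≠ e') : (H.removeEdge e').Ve e = H.Ve e := by
  ext v; simp [Ve, removeEdge, h]

theorem Ev_removeEdge {v e' : ℕ} : (H.removeEdge e').Ev v = (H.Ev v).erase e' := by
  ext e; simp [Ev, removeEdge]; tauto

theorem Ev_removeNode {v v' : ℕ} (h : v' ≠ v) : (H.removeNode v).Ev v' = H.Ev v' := by
  ext e; simp [Ev, removeNode, h]

theorem Ve_removeNode {v e : ℕ} : (H.removeNode v).Ve e = (H.Ve e).erase v := by
  ext w; simp [Ve, removeNode]; tauto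

theorem removeEdge_comm (a b : ℕ) :
    (H.removeEdge a).removeEdge b = (H.removeEdge b).removeEdge a := by
  refine ext rfl (Finset.erase_right_comm ..) ?_
  simp only [removeEdge, Finset.filter_filter, and_comm]

theorem removeNode_comm (a b : ℕ) :
    (H.removeNode a).removeNode b = (H.removeNode b).removeNode a := by
  refine ext (Finset.erase_right_comm ..) rfl ?_
  simp only [removeNode, Finset.filter_filter, and_comm]

theorem removeEdge_removeNode (e v : ℕ) :
    (H.removeEdge e).removeNode v = (H.removeNode v).removeEdge e := by
  refine ext rfl rfl ?_
  simp only [removeEdge, removeNode, Finset.filter_filter, and_comm]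

def size (H : HG) : ℕ := H.V.card + H.E.card

def IsDominatingEdge (H : HG) (e' : ℕ) : Prop := ∃ e ∈ H.E, e ≠ e' ∧ H.Ve e ⊆ H.Ve e'

def IsDominatedNode (H : HG) (v : ℕ) : Prop := ∃ v' ∈ H.V, v ≠ v' ∧ H.Ev v ⊆ H.Ev v'

theorem IsDominatingEdge.removeNode {e v : ℕ} (h : H.IsDominatingEdge e) :
    (H.removeNode v).IsDominatingEdge e := by
  obtain ⟨d, hd, hne, hsub⟩ := h
  refine ⟨d, hd, hne, ?_⟩
  rw [Ve_removeNode, Ve_removeNode]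
  exact Finset.erase_subset_erase _ hsub

theorem IsDominatedNode.removeEdge {v e : ℕ} (h : H.IsDominatedNode v) :
    (H.removeEdge e).IsDominatedNode v := by
  obtain ⟨w, hw, hne, hsub⟩ := h
  refine ⟨w, hw, hne, ?_⟩
  rw [Ev_removeEdge, Ev_removeEdge]
  exact Finset.erase_subset_erase _ hsub

/-- If the witness for `e₂` is `e₁` itself, the witness for `e₁` takes over by transitivity. -/
theorem IsDominatingEdge.removeEdge {e₁ e₂ : ℕ} (h₁ : H.IsDominatingEdge e₁)
    (h₂ : H.IsDominatingEdge e₂) (hne : H.Ve e₁ ≠ H.Ve e₂) :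
    (H.removeEdge e₁).IsDominatingEdge e₂ := by
  obtain ⟨d₂, hd₂, hd₂e₂, hsub₂⟩ := h₂
  have he₂e₁ : e₂ ≠ e₁ := by rintro rfl; exact hne rfl
  by_cases hd₂e₁ : d₂ = e₁
  · subst hd₂e₁
    obtain ⟨d₁, hd₁, hd₁d₂, hsub₁⟩ := h₁
    have hd₁e₂ : d₁ ≠ e₂ := by rintro rfl; exact hne (hsub₂.antisymm hsub₁)
    refine ⟨d₁, Finset.mem_erase.2 ⟨hd₁d₂, hd₁⟩, hd₁e₂, ?_⟩
    rw [Ve_removeEdge hd₁d₂, Ve_removeEdge he₂e₁]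
    exact hsub₁.trans hsub₂
  · refine ⟨d₂, Finset.mem_erase.2 ⟨hd₂e₁, hd₂⟩, hd₂e₂, ?_⟩
    rwa [Ve_removeEdge hd₂e₁, Ve_removeEdge he₂e₁]

theorem IsDominatedNode.removeNode {v₁ v₂ : ℕ} (h₁ : H.IsDominatedNode v₁)
    (h₂ : H.IsDominatedNode v₂) (hne : H.Ev v₁ ≠ H.Ev v₂) :
    (H.removeNode v₁).IsDominatedNode v₂ := by
  obtain ⟨w₂, hw₂, hv₂w₂, hsub₂⟩ := h₂
  have hv₂v₁ : v₂ ≠ v₁ := by rintro rfl; exact hne rfl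
  by_cases hw₂v₁ : w₂ = v₁
  · subst hw₂v₁
    obtain ⟨w₁, hw₁, hw₂w₁, hsub₁⟩ := h₁
    have hv₂w₁ : v₂ ≠ w₁ := by rintro rfl; exact hne (hsub₁.antisymm hsub₂)
    refine ⟨w₁, Finset.mem_erase.2 ⟨hw₂w₁.symm, hw₁⟩, hv₂w₁, ?_⟩
    rw [Ev_removeNode hv₂v₁, Ev_removeNode hw₂w₁.symm]
    exact hsub₂.trans hsub₁
  · refine ⟨w₂, Finset.mem_erase.2 ⟨hw₂v₁, hw₂⟩, hv₂w₂, ?_⟩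
    rwa [Ev_removeNode hv₂v₁, Ev_removeNode hw₂v₁]

end HG

theorem edgeStep_iff {H K : HG} :
    EdgeStep H K ↔ ∃ e' ∈ H.E, H.IsDominatingEdge e' ∧ K = H.removeEdge e' := by
  constructor
  · rintro ⟨e, e', he, he', hne, hsub, rfl⟩
    exact ⟨e', he', ⟨e, he, hne, hsub⟩, rfl⟩
  · rintro ⟨e', he', ⟨e, he, hne, hsub⟩, rfl⟩
    exact ⟨e, e', he, he', hne, hsub, rfl⟩

theorem nodeStep_iff {H K : HG} :
    NodeStep H K ↔ ∃ v ∈ H.V, H.IsDominatedNode v ∧ K = H.removeNode v := by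
  constructor
  · rintro ⟨v, v', hv, hv', hne, hsub, rfl⟩
    exact ⟨v, hv, ⟨v', hv', hne, hsub⟩, rfl⟩
  · rintro ⟨v, hv, ⟨v', hv', hne, hsub⟩, rfl⟩
    exact ⟨v, v', hv, hv', hne, hsub, rfl⟩

theorem Step.size_lt {H K : HG} (h : Step H K) : K.size < H.size := by
  rcases h with ⟨-, e', -, he', -, -, rfl⟩ | ⟨v, -, hv, -, -, -, rfl⟩
  · have := Finset.card_erase_lt_of_mem he'
    simp only [HG.size, HG.removeEdge]
    omega
  · have := Finset.card_erase_lt_of_mem hv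
    simp only [HG.size, HG.removeNode]
    omega

theorem wellFounded_flip_step : WellFounded (flip Step) :=
  Subrelation.wf (fun h => h.size_lt) (measure HG.size).wf

theorem Iso.refl (H : HG) : Iso H H := ⟨Equiv.refl _, Equiv.refl _, fun _ _ => Iff.rfl⟩

theorem Iso.symm {H K : HG} (h : Iso H K) : Iso K H := by
  obtain ⟨f, g, hfg⟩ := h
  exact ⟨f.symm, g.symm, fun v e => by simpa using (hfg (f.symm v) (g.symm e)).symm⟩

theorem Iso.trans {H K L : HG} (h₁ : Iso H K) (h₂ : Iso K L) : Iso H L := by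
  obtain ⟨f₁, g₁, h₁⟩ := h₁
  obtain ⟨f₂, g₂, h₂⟩ := h₂
  exact ⟨f₂.trans f₁, g₂.trans g₁, fun v e => (h₂ v e).trans (h₁ (f₂ v) (g₂ e))⟩

theorem equivalence_iso : Equivalence Iso := ⟨Iso.refl, Iso.symm, Iso.trans⟩

def IsoVia (H H' : HG) (f : {x // x ∈ H'.V} ≃ {x // x ∈ H.V})
    (g : {x // x ∈ H'.E} ≃ {x // x ∈ H.E}) : Prop :=
  ∀ (v : {x // x ∈ H'.V}) (e : {x // x ∈ H'.E}),
    ((v : ℕ), (e : ℕ)) ∈ H'.I ↔ ((f v : ℕ), (g e : ℕ)) ∈ H.I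

namespace IsoVia

variable {H H' : HG} {f : {x // x ∈ H'.V} ≃ {x // x ∈ H.V}}
  {g : {x // x ∈ H'.E} ≃ {x // x ∈ H.E}}

theorem mem_Ve_iff (hfg : IsoVia H H' f g) (v : {x // x ∈ H'.V}) (e : {x // x ∈ H'.E}) :
    (f v : ℕ) ∈ H.Ve (g e) ↔ (v : ℕ) ∈ H'.Ve e := by
  simp [hfg v e]

theorem mem_Ev_iff (hfg : IsoVia H H' f g) (v : {x // x ∈ H'.V}) (e : {x // x ∈ H'.E}) :
    (g e : ℕ) ∈ H.Ev (f v) ↔ (e : ℕ) ∈ H'.Ev v := by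
  simp [hfg v e]

theorem Ve_subset_Ve (hfg : IsoVia H H' f g) {a b : {x // x ∈ H'.E}} (h : H'.Ve a ⊆ H'.Ve b) :
    H.Ve (g a) ⊆ H.Ve (g b) := by
  intro x hx
  obtain ⟨w, hw⟩ := f.surjective ⟨x, (HG.mem_Ve.1 hx).1⟩
  obtain rfl : x = f w := by rw [hw]
  exact (hfg.mem_Ve_iff w b).2 (h ((hfg.mem_Ve_iff w a).1 hx))

theorem Ev_subset_Ev (hfg : IsoVia H H' f g) {a b : {x // x ∈ H'.V}} (h : H'.Ev a ⊆ H'.Ev b) :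
    H.Ev (f a) ⊆ H.Ev (f b) := by
  intro x hx
  obtain ⟨w, hw⟩ := g.surjective ⟨x, (HG.mem_Ev.1 hx).1⟩
  obtain rfl : x = g w := by rw [hw]
  exact (hfg.mem_Ev_iff b w).2 (h ((hfg.mem_Ev_iff a w).1 hx))

theorem isDominatingEdge (hfg : IsoVia H H' f g) {e' : ℕ} (he' : e' ∈ H'.E)
    (h : H'.IsDominatingEdge e') : H.IsDominatingEdge (g ⟨e', he'⟩) := by
  obtain ⟨e, he, hne, hsub⟩ := h
  refine ⟨g ⟨e, he⟩, (g _).2, ?_, hfg.Ve_subset_Ve hsub⟩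
  simpa [← Subtype.ext_iff] using hne

theorem isDominatedNode (hfg : IsoVia H H' f g) {v : ℕ} (hv : v ∈ H'.V)
    (h : H'.IsDominatedNode v) : H.IsDominatedNode (f ⟨v, hv⟩) := by
  obtain ⟨v', hv', hne, hsub⟩ := h
  refine ⟨f ⟨v', hv'⟩, (f _).2, ?_, hfg.Ev_subset_Ev hsub⟩
  simpa [← Subtype.ext_iff] using hne

theorem iso_removeEdge (hfg : IsoVia H H' f g) (e' : {x // x ∈ H'.E}) :
    Iso (H.removeEdge (g e')) (H'.removeEdge e') := by
  refine ⟨f, g.finsetErase e', fun v e => ?_⟩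
  simp only [HG.removeEdge, Finset.mem_filter]
  refine and_congr (hfg v ⟨e, Finset.mem_of_mem_erase e.2⟩) (not_congr ?_)
  show (e : ℕ) = e' ↔ (g ⟨e, Finset.mem_of_mem_erase e.2⟩ : ℕ) = g e'
  rw [← Subtype.ext_iff, g.injective.eq_iff, Subtype.ext_iff]

theorem iso_removeNode (hfg : IsoVia H H' f g) (v' : {x // x ∈ H'.V}) :
    Iso (H.removeNode (f v')) (H'.removeNode v') := by
  refine ⟨f.finsetErase v', g, fun v e => ?_⟩
  simp only [HG.removeNode, Finset.mem_filter]
  refine and_congr (hfg ⟨v, Finset.mem_of_mem_erase v.2⟩ e) (not_congr ?_)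
  show (v : ℕ) = v' ↔ (f ⟨v, Finset.mem_of_mem_erase v.2⟩ : ℕ) = f v'
  rw [← Subtype.ext_iff, f.injective.eq_iff, Subtype.ext_iff]

end IsoVia

theorem Iso.exists_step {H H' K' : HG} (h : Iso H H') (hs : Step H' K') :
    ∃ K, Step H K ∧ Iso K K' := by
  obtain ⟨f, g, hfg⟩ : ∃ f g, IsoVia H H' f g := h
  rcases hs with hs | hs
  · obtain ⟨e', he', hdom, rfl⟩ := edgeStep_iff.1 hs
    exact ⟨_, Or.inl (edgeStep_iff.2 ⟨_, (g _).2, hfg.isDominatingEdge he' hdom, rfl⟩),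
      hfg.iso_removeEdge ⟨e', he'⟩⟩
  · obtain ⟨v, hv, hdom, rfl⟩ := nodeStep_iff.1 hs
    exact ⟨_, Or.inr (nodeStep_iff.2 ⟨_, (f _).2, hfg.isDominatedNode hv hdom, rfl⟩),
      hfg.iso_removeNode ⟨v, hv⟩⟩

theorem Finset.swap_mem_erase_iff {α : Type*} [DecidableEq α] {s : Finset α} {a b x : α}
    (ha : a ∈ s) (hb : b ∈ s) : Equiv.swap a b x ∈ s.erase a ↔ x ∈ s.erase b := by
  rcases eq_or_ne x a with rfl | hxa
  · simp [ha, hb, eq_comm]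
  rcases eq_or_ne x b with rfl | hxb
  · simp [ha, hb]
  · simp [Equiv.swap_apply_of_ne_of_ne hxa hxb, hxa, hxb]

theorem iso_of_perm {H K : HG} (σ τ : Equiv.Perm ℕ) (hV : ∀ x, x ∈ K.V ↔ σ x ∈ H.V)
    (hE : ∀ x, x ∈ K.E ↔ τ x ∈ H.E)
    (hI : ∀ v ∈ K.V, ∀ e ∈ K.E, (v, e) ∈ K.I ↔ (σ v, τ e) ∈ H.I) : Iso H K :=
  ⟨σ.subtypeEquiv hV, τ.subtypeEquiv hE, fun v e => hI v v.2 e e.2⟩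

namespace HG

variable {H : HG}

theorem mem_I_swap_iff_of_Ve_eq {a b : ℕ} (hab : H.Ve a = H.Ve b) {v : ℕ} (hv : v ∈ H.V)
    (e : ℕ) : (v, Equiv.swap a b e) ∈ H.I ↔ (v, e) ∈ H.I := by
  have hvab : (v, a) ∈ H.I ↔ (v, b) ∈ H.I := by simpa [hv] using Finset.ext_iff.1 hab v
  rcases eq_or_ne e a with rfl | hea
  · simp [hvab]
  rcases eq_or_ne e b with rfl | heb
  · simp [hvab]
  · rw [Equiv.swap_apply_of_ne_of_ne hea heb]

theorem mem_I_swap_iff_of_Ev_eq {a b : ℕ} (hab : H.Ev a = H.Ev b) {e : ℕ} (he : e ∈ H.E)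
    (v : ℕ) : (Equiv.swap a b v, e) ∈ H.I ↔ (v, e) ∈ H.I := by
  have habe : (a, e) ∈ H.I ↔ (b, e) ∈ H.I := by simpa [he] using Finset.ext_iff.1 hab e
  rcases eq_or_ne v a with rfl | hva
  · simp [habe]
  rcases eq_or_ne v b with rfl | hvb
  · simp [habe]
  · rw [Equiv.swap_apply_of_ne_of_ne hva hvb]

theorem iso_removeEdge_of_Ve_eq {a b : ℕ} (ha : a ∈ H.E) (hb : b ∈ H.E)
    (hab : H.Ve a = H.Ve b) :
    Iso (H.removeEdge a) (H.removeEdge b) := by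
  refine iso_of_perm (Equiv.refl ℕ) (Equiv.swap a b) (fun _ => Iff.rfl)
    (fun _ => (Finset.swap_mem_erase_iff ha hb).symm) fun v hv e _ => ?_
  simp only [removeEdge, Finset.mem_filter, Equiv.refl_apply, ne_eq, Equiv.swap_apply_eq_iff,
    Equiv.swap_apply_left, mem_I_swap_iff_of_Ve_eq hab hv]

theorem iso_removeNode_of_Ev_eq {a b : ℕ} (ha : a ∈ H.V) (hb : b ∈ H.V)
    (hab : H.Ev a = H.Ev b) :
    Iso (H.removeNode a) (H.removeNode b) := by
  refine iso_of_perm (Equiv.swap a b) (Equiv.refl ℕ)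
    (fun _ => (Finset.swap_mem_erase_iff ha hb).symm) (fun _ => Iff.rfl) fun v _ e he => ?_
  simp only [removeNode, Finset.mem_filter, Equiv.refl_apply, ne_eq, Equiv.swap_apply_eq_iff,
    Equiv.swap_apply_left, mem_I_swap_iff_of_Ev_eq hab he]

open Relation

theorem joinUpTo_removeEdge_removeEdge {e₁ e₂ : ℕ} (he₁ : e₁ ∈ H.E) (he₂ : e₂ ∈ H.E)
    (h₁ : H.IsDominatingEdge e₁) (h₂ : H.IsDominatingEdge e₂) :
    JoinUpTo Step Iso (H.removeEdge e₁) (H.removeEdge e₂) := by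
  by_cases hVe : H.Ve e₁ = H.Ve e₂
  · exact ⟨_, _, .refl, .refl, iso_removeEdge_of_Ve_eq he₁ he₂ hVe⟩
  have hne : e₁ ≠ e₂ := by rintro rfl; exact hVe rfl
  refine ⟨_, _, .single (Or.inl (edgeStep_iff.2 ⟨e₂, ?_, h₁.removeEdge h₂ hVe, rfl⟩)),
    .single (Or.inl (edgeStep_iff.2 ⟨e₁, ?_, h₂.removeEdge h₁ (Ne.symm hVe), rfl⟩)), ?_⟩
  · exact Finset.mem_erase.2 ⟨hne.symm, he₂⟩
  · exact Finset.mem_erase.2 ⟨hne, he₁⟩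
  · rw [removeEdge_comm]
    exact Iso.refl _

theorem joinUpTo_removeNode_removeNode {v₁ v₂ : ℕ} (hv₁ : v₁ ∈ H.V) (hv₂ : v₂ ∈ H.V)
    (h₁ : H.IsDominatedNode v₁) (h₂ : H.IsDominatedNode v₂) :
    JoinUpTo Step Iso (H.removeNode v₁) (H.removeNode v₂) := by
  by_cases hEv : H.Ev v₁ = H.Ev v₂
  · exact ⟨_, _, .refl, .refl, iso_removeNode_of_Ev_eq hv₁ hv₂ hEv⟩
  have hne : v₁ ≠ v₂ := by rintro rfl; exact hEv rfl
  refine ⟨_, _, .single (Or.inr (nodeStep_iff.2 ⟨v₂, ?_, h₁.removeNode h₂ hEv, rfl⟩)),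
    .single (Or.inr (nodeStep_iff.2 ⟨v₁, ?_, h₂.removeNode h₁ (Ne.symm hEv), rfl⟩)), ?_⟩
  · exact Finset.mem_erase.2 ⟨hne.symm, hv₂⟩
  · exact Finset.mem_erase.2 ⟨hne, hv₁⟩
  · rw [removeNode_comm]
    exact Iso.refl _

theorem joinUpTo_removeEdge_removeNode {e v : ℕ} (he : e ∈ H.E) (hv : v ∈ H.V)
    (hde : H.IsDominatingEdge e) (hdv : H.IsDominatedNode v) :
    JoinUpTo Step Iso (H.removeEdge e) (H.removeNode v) :=
  ⟨_, _, .single (Or.inr (nodeStep_iff.2 ⟨v, hv, hdv.removeEdge, rfl⟩)),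
    .single (Or.inl (edgeStep_iff.2 ⟨e, he, hde.removeNode, rfl⟩)),
    by rw [removeEdge_removeNode]; exact Iso.refl _⟩

end HG

theorem Step.joinUpTo {H A B : HG} (hA : Step H A) (hB : Step H B) :
    Relation.JoinUpTo Step Iso A B := by
  rcases hA with hA | hA <;> rcases hB with hB | hB
  · obtain ⟨e₁, he₁, h₁, rfl⟩ := edgeStep_iff.1 hA
    obtain ⟨e₂, he₂, h₂, rfl⟩ := edgeStep_iff.1 hB
    exact HG.joinUpTo_removeEdge_removeEdge he₁ he₂ h₁ h₂
  · obtain ⟨e, he, hde, rfl⟩ := edgeStep_iff.1 hA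
    obtain ⟨v, hv, hdv, rfl⟩ := nodeStep_iff.1 hB
    exact HG.joinUpTo_removeEdge_removeNode he hv hde hdv
  · obtain ⟨v, hv, hdv, rfl⟩ := nodeStep_iff.1 hA
    obtain ⟨e, he, hde, rfl⟩ := edgeStep_iff.1 hB
    exact (HG.joinUpTo_removeEdge_removeNode he hv hde hdv).symm Iso.symm
  · obtain ⟨v₁, hv₁, h₁, rfl⟩ := nodeStep_iff.1 hA
    obtain ⟨v₂, hv₂, h₂, rfl⟩ := nodeStep_iff.1 hB
    exact HG.joinUpTo_removeNode_removeNode hv₁ hv₂ h₁ h₂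

/-- Confluence up to isomorphism. -/
theorem confluence_up_to_iso (H H₁ H₂ : HG)
    (h₁ : Relation.ReflTransGen Step H H₁) (h₂ : Relation.ReflTransGen Step H H₂) :
    ∃ H₃ H₄ : HG, Relation.ReflTransGen Step H₁ H₃ ∧
      Relation.ReflTransGen Step H₂ H₄ ∧ Iso H₃ H₄ :=
  Relation.joinUpTo_of_locally equivalence_iso wellFounded_flip_step Iso.exists_step
    Step.joinUpTo h₁ h₂
end
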